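/- A finite set HC of propositional Horn clauses has the termination property if and only if HC is recursion-free. -/

import Mathlib

/-- A propositional literal over variables `V`: either a positive or a negative literal. -/
inductive Lit (V : Type) where
  | pos : V → Lit V
  | neg : V → Lit V
deriving DecidableEq

/-- A propositional clause: a finite multiset of literals. -/
abbrev Clause (V : Type) := Multiset (Lit V)

/-- Whether a literal is positive. -/
def Lit.isPos {V : Type} : Lit V → Bool
  | .pos _ => true
  | .neg _ => false

/-- A Horn clause contains at most one positive literal. -/
def IsHorn {V : Type} (c : Clause V) : Prop :=
  c.countP (fun l => l.isPos = true) ≤ 1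

/-- `Resolvent c₁ c₂ r`: `r` is obtained by binary resolution from `c₁` (containing a
positive literal `p`) and `c₂` (containing the negative literal `¬p`). -/
def Resolvent {V : Type} [DecidableEq V] (c₁ c₂ r : Clause V) : Prop :=
  ∃ p : V, Lit.pos p ∈ c₁ ∧ Lit.neg p ∈ c₂ ∧
    r = c₁.erase (Lit.pos p) + c₂.erase (Lit.neg p)

/-- A set of clauses has the termination property if there is no infinite sequence
`c₀, c₁, c₂, …` of clauses such that `c₀ ∈ 𝒞` and each `cᵢ` (for `i ≥ 1`) is derived by
binary resolution from `c_{i-1}` and a clause of `𝒞`. -/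
def TerminationProperty {V : Type} [DecidableEq V] (𝒞 : Set (Clause V)) : Prop :=
  ¬ ∃ f : ℕ → Clause V, f 0 ∈ 𝒞 ∧
      ∀ i : ℕ, ∃ d ∈ 𝒞, Resolvent (f i) d (f (i + 1)) ∨ Resolvent d (f i) (f (i + 1))

/-- The dependence relation of a set of Horn clauses: `p →_HC q` iff some clause contains
the positive literal `p` and the negative literal `¬q`. -/
def Dep {V : Type} (HC : Set (Clause V)) (p q : V) : Prop :=
  ∃ c ∈ HC, Lit.pos p ∈ c ∧ Lit.neg q ∈ c

/-- A set of Horn clauses is recursion-free if its dependence relation is acyclic,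
i.e., the transitive closure of the dependence relation is irreflexive. -/
def RecursionFree {V : Type} (HC : Set (Clause V)) : Prop :=
  Irreflexive (Relation.TransGen (Dep HC))

/-!
If `p →⁺ p`, a clause containing `¬s` for some `s` on a cycle resolves against the clause
witnessing `s → s'`, with `s'` again on the cycle; so a negative cyclic literal survives forever.

Conversely, a resolution step with a Horn clause `d` replaces one literal of the current clause
by the remaining literals of `d`: the resolved `¬p` by negative literals `¬q` with `p → q`
(the only positive literal of `d` is `p`), the resolved `p` by negative literals or by positive
literals `q` with `q → p`. For an acyclic dependence relation on finitely many variables these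
are all strictly lighter under `litWeight`, which counts reachable variables; so the clauses
descend in the Dershowitz–Manna ordering, which is well founded.
-/

open Relation Function

theorem Relation.ncard_transGen_lt_of_rel {α : Type*} {r : α → α → Prop}
    (hfin : {b | ∃ a, r a b}.Finite) (hirr : ∀ a, ¬ TransGen r a a) {a b : α} (hab : r a b) :
    {x | TransGen r b x}.ncard < {x | TransGen r a x}.ncard := by
  have hsub : {x | TransGen r a x} ⊆ {b | ∃ a, r a b} := fun x hx => by
    obtain ⟨y, -, hyx⟩ := TransGen.tail'_iff.mp hx
    exact ⟨y, hyx⟩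
  refine Set.ncard_lt_ncard ?_ (hfin.subset hsub)
  exact (Set.ssubset_iff_of_subset fun x hx => TransGen.head hab hx).mpr
    ⟨b, .single hab, hirr b⟩

theorem not_acc_of_forall_exists_rel {α : Type*} {r : α → α → Prop} {P : α → Prop}
    (h : ∀ a, P a → ∃ b, P b ∧ r b a) {a : α} (ha : P a) : ¬ Acc r a := by
  intro hacc
  induction hacc with
  | intro a _ ih =>
    obtain ⟨b, hb, hba⟩ := h a ha
    exact ih b hba hb

theorem Multiset.isDershowitzMannaLT_map_erase_add {α β : Type*} [DecidableEq α] [Preorder β]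
    (w : α → β) {c e : Multiset α} {a : α} (ha : a ∈ c) (he : ∀ b ∈ e, w b < w a) :
    IsDershowitzMannaLT ((c.erase a + e).map w) (c.map w) := by
  refine ⟨(c.erase a).map w, e.map w, {w a}, by simp, map_add _ _ _, ?_, ?_⟩
  · conv_lhs => rw [← cons_erase ha]
    rw [map_cons, ← singleton_add, add_comm]
  · simpa using he

section Clauses

variable {V : Type} {HC : Set (Clause V)}

theorem exists_dep_cyclic_of_cyclic {p : V} (hp : TransGen (Dep HC) p p) :
    ∃ s, Dep HC p s ∧ TransGen (Dep HC) s s := by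
  obtain ⟨s, hps, hsp⟩ := TransGen.head'_iff.mp hp
  exact ⟨s, hps, TransGen.tail' hsp hps⟩

theorem finite_setOf_exists_mem_of_injective (hfin : HC.Finite) {g : V → Lit V} (hg : Injective g) :
    {p | ∃ c ∈ HC, g p ∈ c}.Finite := by
  have : {p | ∃ c ∈ HC, g p ∈ c} = ⋃ c ∈ HC, g ⁻¹' {l | l ∈ c} := by ext; simp
  rw [this]
  exact hfin.biUnion fun c _ => (Multiset.finite_toSet c).preimage hg.injOn

noncomputable def litWeight (HC : Set (Clause V)) : Lit V → ℕ ×ₗ ℕ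
  | .neg p => toLex (0, {x | TransGen (Dep HC) p x}.ncard)
  | .pos p => toLex (1, {x | TransGen (flip (Dep HC)) p x}.ncard)

theorem litWeight_neg_lt_pos (p q : V) : litWeight HC (.neg q) < litWeight HC (.pos p) :=
  Prod.Lex.toLex_lt_toLex.mpr (.inl zero_lt_one)

theorem litWeight_neg_lt_neg (hfin : HC.Finite) (hrf : RecursionFree HC) {p q : V}
    (h : Dep HC p q) : litWeight HC (.neg q) < litWeight HC (.neg p) := by
  refine Prod.Lex.toLex_lt_toLex.mpr (.inr ⟨rfl, Relation.ncard_transGen_lt_of_rel ?_ hrf h⟩)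
  refine (finite_setOf_exists_mem_of_injective hfin (g := Lit.neg) fun _ _ => Lit.neg.inj).subset ?_
  rintro b ⟨a, c, hc, -, hb⟩
  exact ⟨c, hc, hb⟩

theorem litWeight_pos_lt_pos (hfin : HC.Finite) (hrf : RecursionFree HC) {p q : V}
    (h : Dep HC p q) : litWeight HC (.pos p) < litWeight HC (.pos q) := by
  have hirr : ∀ a, ¬ TransGen (flip (Dep HC)) a a := fun a h => hrf a (transGen_swap.mp h)
  refine Prod.Lex.toLex_lt_toLex.mpr (.inr ⟨rfl, Relation.ncard_transGen_lt_of_rel ?_ hirr h⟩)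
  refine (finite_setOf_exists_mem_of_injective hfin (g := Lit.pos) fun _ _ => Lit.pos.inj).subset ?_
  rintro b ⟨a, c, hc, hb, -⟩
  exact ⟨c, hc, hb⟩

variable [DecidableEq V]

theorem IsHorn.pos_notMem_erase_pos {c : Clause V} (h : IsHorn c) {p : V} (hp : Lit.pos p ∈ c)
    (q : V) : Lit.pos q ∉ c.erase (.pos p) := by
  intro hq
  have hcount := Multiset.countP_pos (p := fun l : Lit V => l.isPos).mpr ⟨_, hq, rfl⟩
  rw [IsHorn, ← Multiset.cons_erase hp,
    Multiset.countP_cons_of_pos (p := fun l : Lit V => l.isPos) _ rfl] at h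
  omega

def ResolvesTo (HC : Set (Clause V)) (c c' : Clause V) : Prop :=
  ∃ d ∈ HC, Resolvent c d c' ∨ Resolvent d c c'

theorem terminationProperty_iff_forall_acc :
    TerminationProperty HC ↔ ∀ c ∈ HC, Acc (flip (ResolvesTo HC)) c := by
  constructor
  · intro h c hc
    by_contra hacc
    obtain ⟨f, rfl, hf⟩ := not_acc_iff_exists_descending_chain.mp hacc
    exact h ⟨f, hc, hf⟩
  · rintro h ⟨f, hf0, hf⟩
    exact not_acc_iff_exists_descending_chain.mpr ⟨f, rfl, hf⟩ (h _ hf0)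

theorem exists_resolvesTo_of_cyclic_neg {c : Clause V} {q : V} (hq : Lit.neg q ∈ c)
    (hcyc : TransGen (Dep HC) q q) :
    ∃ c', ResolvesTo HC c c' ∧ ∃ s, Lit.neg s ∈ c' ∧ TransGen (Dep HC) s s := by
  obtain ⟨s, ⟨d, hd, hqd, hsd⟩, hs⟩ := exists_dep_cyclic_of_cyclic hcyc
  refine ⟨d.erase (.pos q) + c.erase (.neg q), ⟨d, hd, .inr ⟨q, hqd, hq, rfl⟩⟩, s, ?_, hs⟩
  exact Multiset.mem_add.mpr (.inl ((Multiset.mem_erase_of_ne (by simp)).mpr hsd))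

theorem not_terminationProperty_of_not_recursionFree (h : ¬ RecursionFree HC) :
    ¬ TerminationProperty HC := by
  obtain ⟨p, hp⟩ : ∃ p, TransGen (Dep HC) p p := not_forall_not.mp h
  obtain ⟨s, ⟨c, hc, -, hsc⟩, hs⟩ := exists_dep_cyclic_of_cyclic hp
  rw [terminationProperty_iff_forall_acc]
  refine fun hacc => not_acc_of_forall_exists_rel
    (P := fun c => ∃ q, Lit.neg q ∈ c ∧ TransGen (Dep HC) q q) ?_ ⟨s, hsc, hs⟩ (hacc c hc)
  rintro c ⟨q, hq, hcyc⟩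
  obtain ⟨c', hcc', hc'⟩ := exists_resolvesTo_of_cyclic_neg hq hcyc
  exact ⟨c', hc', hcc'⟩

theorem ResolvesTo.exists_erase_add (hfin : HC.Finite) (hhorn : ∀ c ∈ HC, IsHorn c)
    (hrf : RecursionFree HC) {c c' : Clause V} (h : ResolvesTo HC c c') :
    ∃ L ∈ c, ∃ e, c' = c.erase L + e ∧ ∀ l ∈ e, litWeight HC l < litWeight HC L := by
  obtain ⟨d, hd, ⟨p, hpc, hpd, rfl⟩ | ⟨p, hpd, hpc, rfl⟩⟩ := h
  · refine ⟨_, hpc, _, rfl, fun l hl => ?_⟩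
    cases l with
    | pos q => exact litWeight_pos_lt_pos hfin hrf ⟨d, hd, Multiset.mem_of_mem_erase hl, hpd⟩
    | neg q => exact litWeight_neg_lt_pos p q
  · refine ⟨_, hpc, _, add_comm _ _, fun l hl => ?_⟩
    cases l with
    | pos q => exact absurd hl ((hhorn d hd).pos_notMem_erase_pos hpd q)
    | neg q => exact litWeight_neg_lt_neg hfin hrf ⟨d, hd, hpd, Multiset.mem_of_mem_erase hl⟩

theorem wellFounded_flip_resolvesTo (hfin : HC.Finite) (hhorn : ∀ c ∈ HC, IsHorn c)
    (hrf : RecursionFree HC) : WellFounded (flip (ResolvesTo HC)) := by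
  refine Subrelation.wf (fun {c' c} h => ?_)
    (InvImage.wf (Multiset.map (litWeight HC)) Multiset.wellFounded_isDershowitzMannaLT)
  obtain ⟨L, hL, e, rfl, he⟩ := h.exists_erase_add hfin hhorn hrf
  exact Multiset.isDershowitzMannaLT_map_erase_add _ hL he

end Clauses

/-- A finite set of propositional Horn clauses has the termination property if and only
if it is recursion-free. -/
theorem terminationProperty_iff_recursionFree {V : Type} [DecidableEq V]
    (HC : Set (Clause V)) (hfin : HC.Finite) (hhorn : ∀ c ∈ HC, IsHorn c) :
    TerminationProperty HC ↔ RecursionFree HC :=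
  ⟨not_imp_not.mp not_terminationProperty_of_not_recursionFree, fun hrf =>
    terminationProperty_iff_forall_acc.mpr fun c _ =>
      (wellFounded_flip_resolvesTo hfin hhorn hrf).apply c⟩
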